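/- Every monomial in the partic algebra PP_N is equal to a monomial in normal form, i.e. to a monomial of the shape a_{N-1}^{d_{N-1}} ⋯ a_3^{d_3} a_2^{d_2} a_1^{k_1} a_2^{k_2} ⋯ a_{N-1}^{k_{N-1}} with nonnegative integers d_i, k_i satisfying d_2 ≤ k_1 and d_i ≤ d_{i-1} + k_{i-1} for all 3 ≤ i ≤ N-1. -/

import Mathlib

/-!
Write `W_p = a_p^{d_p} ⋯ a_1^{d_1} a_1^{e_1} ⋯ a_p^{e_p} = a_p^{d_p} W_{p-1} a_p^{e_p}`. By
induction on the length of a monomial it suffices to see that `W_{N-1} a_j` is again such a word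
with `d_{i+1} ≤ d_i + e_i`. If no `a_{j+1}` stands to the right of `a_j^{e_j}`, then `a_j` commutes
with everything to its right and `e_j` grows by one. Otherwise the plactic relations give
`a_j^{e_j} a_{j+1}^{m+1} a_j = a_{j+1} a_j^{e_j+1} a_{j+1}^m`, and the new `a_{j+1}` must travel
left through `a_j^{d_j} W_{j-1}` to join `a_{j+1}^{d_{j+1}}`. With `x, y, z = a_{j-1}, a_j, a_{j+1}`
the plactic relations say that `y x` commutes with `x` and `y`, and the partic relation says
`y x z y = z y x y`; from these, an induction on the exponents shows
`y^b x^c W_{j-2} x^{c'} z y = z y^b x^c W_{j-2} x^{c'} y` whenever `b ≤ c + c'`, which is exactly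
the normal form inequality `d_j ≤ d_{j-1} + e_{j-1}`.
-/

inductive ParticRel (K : Type*) [CommRing K] (N : ℕ) :
    FreeAlgebra K (Fin (N - 1)) → FreeAlgebra K (Fin (N - 1)) → Prop
  | plac1 : ∀ i j : Fin (N - 1), (i : ℕ) = (j : ℕ) + 1 →
      ParticRel K N (FreeAlgebra.ι K i * FreeAlgebra.ι K j * FreeAlgebra.ι K i)
        (FreeAlgebra.ι K i * FreeAlgebra.ι K i * FreeAlgebra.ι K j)
  | plac2 : ∀ i j : Fin (N - 1), (j : ℕ) = (i : ℕ) + 1 →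
      ParticRel K N (FreeAlgebra.ι K i * FreeAlgebra.ι K j * FreeAlgebra.ι K i)
        (FreeAlgebra.ι K j * FreeAlgebra.ι K i * FreeAlgebra.ι K i)
  | comm : ∀ i j : Fin (N - 1), (i : ℕ) + 1 < (j : ℕ) →
      ParticRel K N (FreeAlgebra.ι K i * FreeAlgebra.ι K j)
        (FreeAlgebra.ι K j * FreeAlgebra.ι K i)
  | partic : ∀ lo mid hi : Fin (N - 1), (mid : ℕ) = (lo : ℕ) + 1 → (hi : ℕ) = (mid : ℕ) + 1 →
      ParticRel K N
        (FreeAlgebra.ι K mid * FreeAlgebra.ι K lo * FreeAlgebra.ι K hi * FreeAlgebra.ι K mid)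
        (FreeAlgebra.ι K hi * FreeAlgebra.ι K mid * FreeAlgebra.ι K lo * FreeAlgebra.ι K mid)

/-- The partic algebra `PP_N`, with generators `a_1, …, a_{N-1}`. -/
abbrev ParticAlgebra (K : Type*) [CommRing K] (N : ℕ) := RingQuot (ParticRel K N)

/-- The generator `a_i` of the partic algebra, for `1 ≤ i ≤ N-1` (junk value `0`
outside that range). -/
noncomputable def ppa (K : Type*) [CommRing K] (N : ℕ) (i : ℕ) : ParticAlgebra K N :=
  if h : 1 ≤ i ∧ i ≤ N - 1 then
    RingQuot.mkAlgHom K (ParticRel K N) (FreeAlgebra.ι K ⟨i - 1, by omega⟩) else 0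

/-- The normal-form monomial
`a_{N-1}^{d_{N-1}} ⋯ a_2^{d_2} · a_1^{e_1} a_2^{e_2} ⋯ a_{N-1}^{e_{N-1}}`
in the partic algebra. -/
noncomputable def nfMon (K : Type*) [CommRing K] (N : ℕ) (d e : ℕ → ℕ) : ParticAlgebra K N :=
  ((List.range (N - 2)).map fun t => ppa K N (N - 1 - t) ^ d (N - 1 - t)).prod *
    ((List.range (N - 1)).map fun t => ppa K N (t + 1) ^ e (t + 1)).prod

open Function

section Monoid

variable {M : Type*} [Monoid M]

-- The partic relation reads `CommuteBefore a_{i+1} a_i (a_i * a_{i-1})`.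
def CommuteBefore (z y u : M) : Prop := u * z * y = z * u * y

namespace CommuteBefore

variable {y z u v w : M}

theorem of_commute (h : Commute z u) : CommuteBefore z y u := by
  rw [CommuteBefore, h.eq]

theorem mul_left (hw : Commute z w) (hu : CommuteBefore z y u) : CommuteBefore z y (w * u) := by
  unfold CommuteBefore at *
  rw [mul_assoc w, mul_assoc w, hu]
  simp only [← mul_assoc, hw.eq]

theorem mul_right (hu : CommuteBefore z y u) (hz : Commute z w) (hy : Commute y w) :
    CommuteBefore z y (u * w) := by
  unfold CommuteBefore at *
  calc u * w * z * y = u * z * y * w := by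
        simp only [mul_assoc, ((hz.mul_left hy).eq).symm]
    _ = z * (u * w) * y := by rw [hu]; simp only [mul_assoc, hy.eq]

theorem mul (hw : CommuteBefore z y w) (hu : CommuteBefore z y u) (huv : u * y = y * v) :
    CommuteBefore z y (w * u) := by
  unfold CommuteBefore at *
  calc w * u * z * y = w * (u * z * y) := by simp only [mul_assoc]
    _ = w * z * y * v := by rw [hu, mul_assoc z, huv]; simp only [mul_assoc]
    _ = z * (w * u) * y := by rw [hw, mul_assoc (z * w), ← huv]; simp only [mul_assoc]

theorem pow (h : Commute y (z * y)) (n : ℕ) : CommuteBefore z y (y ^ n) := by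
  rw [CommuteBefore, mul_assoc, (h.pow_left n).eq, mul_assoc, mul_assoc, pow_mul_comm']

end CommuteBefore

-- The plactic relations `y x y = y y x` and `x y x = y x x` say that `y * x` commutes with `y`
-- and with `x`.
namespace Commute

variable {x y : M}

theorem mul_pow_succ_eq_pow_mul (hx : Commute x (y * x)) (k : ℕ) :
    y * x ^ (k + 1) = x ^ k * (y * x) := by
  rw [pow_succ', ← mul_assoc, (hx.pow_left k).eq]

theorem pow_succ_mul_eq_mul_pow (hy : Commute y (y * x)) (k : ℕ) :
    y ^ (k + 1) * x = y * x * y ^ k := by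
  rw [pow_succ, mul_assoc, (hy.pow_left k).eq]

theorem mul_pow_succ_mul_pow (hx : Commute x (y * x)) (hy : Commute y (y * x)) (h k : ℕ) :
    y * x ^ (h + 1) * y ^ k = x ^ h * y ^ (k + 1) * x := by
  rw [hx.mul_pow_succ_eq_pow_mul, mul_assoc, ← (hy.pow_left k).eq, pow_succ]
  simp only [mul_assoc]

theorem mul_pow_eq_pow_mul_pow (hx : Commute x (y * x)) (n : ℕ) :
    (y * x) ^ n = y ^ n * x ^ n := by
  induction n with
  | zero => simp
  | succ n ih =>
    rw [pow_succ, ih, mul_assoc, (hx.pow_left n).eq, pow_succ y, pow_succ' x]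
    simp only [mul_assoc]

end Commute

theorem CommuteBefore.pow_mul_pow {x y z : M} (hx : Commute x (y * x)) (hy : Commute y (y * x))
    (hxz : Commute x z) (hP : CommuteBefore z y (y * x)) {b c : ℕ} (hbc : b ≤ c) :
    CommuteBefore z y (y ^ b * x ^ c) := by
  obtain ⟨k, rfl⟩ := Nat.exists_eq_add_of_le hbc
  have hpow : ∀ n, CommuteBefore z y ((y * x) ^ n) := by
    intro n
    induction n with
    | zero => simpa using CommuteBefore.of_commute (Commute.one_right z)
    | succ n ih => rw [pow_succ']; exact hP.mul ih (hy.pow_right n).eq.symm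
  rw [pow_add, ← mul_assoc, ← hx.mul_pow_eq_pow_mul_pow, ((hx.pow_left k).pow_right b).eq.symm]
  exact (hpow b).mul_left (hxz.pow_left k).symm

end Monoid

namespace ParticAlgebra

variable {K : Type*} [CommRing K] {N : ℕ}

local notation "𝔞" => ppa K N

theorem ppa_succ {i : ℕ} (h : i < N - 1) :
    𝔞 (i + 1) = RingQuot.mkAlgHom K (ParticRel K N) (FreeAlgebra.ι K ⟨i, h⟩) :=
  dif_pos ⟨by omega, by omega⟩

theorem ppa_zero : 𝔞 0 = 0 := dif_neg (by omega)

theorem ppa_of_lt {i : ℕ} (h : N - 1 < i) : 𝔞 i = 0 := dif_neg (by omega)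

-- Generators out of range are `0`, so the defining relations hold for all indices.
theorem commute_ppa_succ_mul (i : ℕ) : Commute (𝔞 (i + 1)) (𝔞 (i + 2) * 𝔞 (i + 1)) := by
  by_cases hi : i + 1 < N - 1
  · have h := RingQuot.mkAlgHom_rel K
      (ParticRel.plac2 (K := K) (N := N) ⟨i, by omega⟩ ⟨i + 1, hi⟩ rfl)
    rw [ppa_succ (by omega : i < N - 1), ppa_succ hi]
    simpa only [Commute, SemiconjBy, map_mul, mul_assoc] using h
  · simp [ppa_of_lt (K := K) (N := N) (i := i + 2) (by omega)]

theorem commute_ppa_succ_succ_mul (i : ℕ) : Commute (𝔞 (i + 2)) (𝔞 (i + 2) * 𝔞 (i + 1)) := by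
  by_cases hi : i + 1 < N - 1
  · have h := RingQuot.mkAlgHom_rel K
      (ParticRel.plac1 (K := K) (N := N) ⟨i + 1, hi⟩ ⟨i, by omega⟩ rfl)
    rw [ppa_succ (by omega : i < N - 1), ppa_succ hi]
    simpa only [Commute, SemiconjBy, map_mul, mul_assoc] using h.symm
  · simp [ppa_of_lt (K := K) (N := N) (i := i + 2) (by omega)]

theorem commute_ppa_ppa {i j : ℕ} (h : i + 2 ≤ j) : Commute (𝔞 i) (𝔞 j) := by
  rcases Nat.eq_zero_or_pos i with rfl | hi
  · simp [ppa_zero]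
  by_cases hj : j ≤ N - 1
  · obtain ⟨i, rfl⟩ := Nat.exists_eq_add_one_of_ne_zero hi.ne'
    obtain ⟨j, rfl⟩ := Nat.exists_eq_add_one_of_ne_zero (by omega : j ≠ 0)
    have h := RingQuot.mkAlgHom_rel K
      (ParticRel.comm (K := K) (N := N) ⟨i, by omega⟩ ⟨j, by omega⟩ (by simp only; omega))
    rw [ppa_succ (by omega : i < N - 1), ppa_succ (by omega : j < N - 1)]
    simpa only [Commute, SemiconjBy, map_mul] using h
  · simp [ppa_of_lt (K := K) (N := N) (i := j) (by omega)]

theorem commuteBefore_ppa (i : ℕ) :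
    CommuteBefore (𝔞 (i + 3)) (𝔞 (i + 2)) (𝔞 (i + 2) * 𝔞 (i + 1)) := by
  by_cases hi : i + 2 < N - 1
  · have h := RingQuot.mkAlgHom_rel K
      (ParticRel.partic (K := K) (N := N) ⟨i, by omega⟩ ⟨i + 1, by omega⟩ ⟨i + 2, hi⟩ rfl rfl)
    rw [ppa_succ (by omega : i < N - 1), ppa_succ (by omega : i + 1 < N - 1), ppa_succ hi]
    simpa only [CommuteBefore, map_mul, mul_assoc] using h
  · simp [CommuteBefore, ppa_of_lt (K := K) (N := N) (i := i + 3) (by omega)]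

def commutantFrom (K : Type*) [CommRing K] (N p : ℕ) : Submonoid (ParticAlgebra K N) :=
  Submonoid.centralizer (ppa K N '' Set.Ici p)

theorem mem_commutantFrom {p : ℕ} {X : ParticAlgebra K N} :
    X ∈ commutantFrom K N p ↔ ∀ m, p ≤ m → Commute (𝔞 m) X := by
  simp [commutantFrom, Submonoid.mem_centralizer_iff, Commute, SemiconjBy]

theorem commutantFrom_mono {p q : ℕ} (h : p ≤ q) : commutantFrom K N p ≤ commutantFrom K N q :=
  Submonoid.centralizer_le (Set.image_mono (Set.Ici_subset_Ici.mpr h))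

theorem ppa_mem_commutantFrom (i : ℕ) : 𝔞 i ∈ commutantFrom K N (i + 2) :=
  mem_commutantFrom.2 fun _ hm => (commute_ppa_ppa hm).symm

/-- `nestMon K N d e p = a_p^{d_p} ⋯ a_1^{d_1} a_1^{e_1} ⋯ a_p^{e_p}`. -/
noncomputable def nestMon (K : Type*) [CommRing K] (N : ℕ) (d e : ℕ → ℕ) : ℕ → ParticAlgebra K N
  | 0 => 1
  | p + 1 => ppa K N (p + 1) ^ d (p + 1) * nestMon K N d e p * ppa K N (p + 1) ^ e (p + 1)

theorem nestMon_congr {d e d' e' : ℕ → ℕ} {p : ℕ} (hd : ∀ m ≤ p, d m = d' m)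
    (he : ∀ m ≤ p, e m = e' m) : nestMon K N d e p = nestMon K N d' e' p := by
  induction p with
  | zero => rfl
  | succ p ih =>
    rw [nestMon, nestMon, hd _ le_rfl, he _ le_rfl,
      ih (fun m hm => hd m (by omega)) (fun m hm => he m (by omega))]

theorem nestMon_zero_zero (p : ℕ) : nestMon K N 0 0 p = 1 := by
  induction p with
  | zero => rfl
  | succ p ih => simp [nestMon, ih]

theorem nestMon_mem_commutantFrom (d e : ℕ → ℕ) (p : ℕ) :
    nestMon K N d e p ∈ commutantFrom K N (p + 2) := by
  induction p with
  | zero => exact one_mem _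
  | succ p ih =>
    have ha := ppa_mem_commutantFrom (K := K) (N := N) (p + 1)
    exact mul_mem (mul_mem (pow_mem ha _) (commutantFrom_mono (by omega) ih)) (pow_mem ha _)

theorem nestMon_mul_of_le {d e d' e' : ℕ → ℕ} {x : ParticAlgebra K N} {q p : ℕ} (hqp : q ≤ p)
    (hq : nestMon K N d e q * x = nestMon K N d' e' q)
    (hx : ∀ m, q < m → m ≤ p → Commute x (𝔞 m ^ e m))
    (hd : ∀ m, q < m → m ≤ p → d' m = d m) (he : ∀ m, q < m → m ≤ p → e' m = e m) :
    nestMon K N d e p * x = nestMon K N d' e' p := by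
  induction p, hqp using Nat.le_induction with
  | base => exact hq
  | succ p hqp ih =>
    have ih' := ih (fun m h1 h2 => hx m h1 (by omega)) (fun m h1 h2 => hd m h1 (by omega))
      (fun m h1 h2 => he m h1 (by omega))
    rw [nestMon, nestMon, hd _ (by omega) le_rfl, he _ (by omega) le_rfl, mul_assoc,
      ← (hx _ (by omega) le_rfl).eq, ← mul_assoc, mul_assoc _ (nestMon K N d e p), ih']

theorem exists_ppa_mul_nestMon_mul_pow (d e : ℕ → ℕ) (q c : ℕ) :
    ∃ X ∈ commutantFrom K N (q + 2), ∃ Y ∈ commutantFrom K N (q + 2),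
      𝔞 (q + 1) * nestMon K N d e q * 𝔞 (q + 1) ^ c = X * 𝔞 (q + 1) ^ (c + 1) * Y := by
  induction q generalizing c with
  | zero => exact ⟨1, one_mem _, 1, one_mem _, by simp [nestMon, pow_succ']⟩
  | succ q ih =>
    set x := 𝔞 (q + 1)
    set y := 𝔞 (q + 2)
    set M := nestMon K N d e q
    have hx : Commute x (y * x) := commute_ppa_succ_mul q
    have hy : Commute y (y * x) := commute_ppa_succ_succ_mul q
    have hxC : x ∈ commutantFrom K N (q + 3) := ppa_mem_commutantFrom (q + 1)
    have hMC : M ∈ commutantFrom K N (q + 2) := nestMon_mem_commutantFrom d e q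
    have hyM : Commute y M := mem_commutantFrom.1 hMC _ le_rfl
    have hmono := commutantFrom_mono (K := K) (N := N) (show q + 2 ≤ q + 3 by omega)
    show ∃ X ∈ commutantFrom K N (q + 3), ∃ Y ∈ commutantFrom K N (q + 3),
      y * (x ^ d (q + 1) * M * x ^ e (q + 1)) * y ^ c = X * y ^ (c + 1) * Y
    cases d (q + 1) with
    | zero =>
      cases e (q + 1) with
      | zero =>
        refine ⟨M, hmono hMC, 1, one_mem _, ?_⟩
        simp only [pow_zero, one_mul, mul_one]
        rw [hyM.eq, mul_assoc, ← pow_succ']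
      | succ h =>
        refine ⟨M * x ^ h, mul_mem (hmono hMC) (pow_mem hxC h), x, hxC, ?_⟩
        calc y * (x ^ 0 * M * x ^ (h + 1)) * y ^ c = M * (y * x ^ (h + 1) * y ^ c) := by
              rw [pow_zero, one_mul, ← mul_assoc, hyM.eq]; simp only [mul_assoc]
          _ = M * x ^ h * y ^ (c + 1) * x := by
              rw [hx.mul_pow_succ_mul_pow hy]; simp only [mul_assoc]
    | succ g =>
      obtain ⟨X, hXC, Y, hYC, hXY⟩ := ih (e (q + 1))
      have hyX : Commute y X := mem_commutantFrom.1 hXC _ le_rfl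
      have hyY : Commute y Y := mem_commutantFrom.1 hYC _ le_rfl
      refine ⟨x ^ g * X * x ^ e (q + 1),
        mul_mem (mul_mem (pow_mem hxC g) (hmono hXC)) (pow_mem hxC _),
        x * Y, mul_mem hxC (hmono hYC), ?_⟩
      calc y * (x ^ (g + 1) * M * x ^ e (q + 1)) * y ^ c
          = x ^ g * (y * (x * M * x ^ e (q + 1))) * y ^ c := by
            rw [← mul_assoc, ← mul_assoc, hx.mul_pow_succ_eq_pow_mul]; simp only [mul_assoc]
        _ = x ^ g * (y * X) * x ^ (e (q + 1) + 1) * (Y * y ^ c) := by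
            rw [hXY]; simp only [mul_assoc]
        _ = x ^ g * X * (y * x ^ (e (q + 1) + 1) * y ^ c) * Y := by
            rw [hyX.eq, ← (hyY.pow_left c).eq]; simp only [mul_assoc]
        _ = x ^ g * X * x ^ e (q + 1) * y ^ (c + 1) * (x * Y) := by
            rw [hx.mul_pow_succ_mul_pow hy]; simp only [mul_assoc]

theorem commuteBefore_pow_mul_pow_mul_mul_pow (d e : ℕ → ℕ) (k c : ℕ) :
    ∀ {b c' : ℕ}, b ≤ c + c' → CommuteBefore (𝔞 (k + 3)) (𝔞 (k + 2))
      (𝔞 (k + 2) ^ b * (𝔞 (k + 1) ^ c * nestMon K N d e k * 𝔞 (k + 1) ^ c')) := by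
  set x := 𝔞 (k + 1)
  set y := 𝔞 (k + 2)
  set z := 𝔞 (k + 3)
  set V := nestMon K N d e k
  have hx : Commute x (y * x) := commute_ppa_succ_mul k
  have hy : Commute y (y * x) := commute_ppa_succ_succ_mul k
  have hxz : Commute x z := commute_ppa_ppa (by omega)
  have hP : CommuteBefore z y (y * x) := commuteBefore_ppa k
  have hxC : x ∈ commutantFrom K N (k + 3) := ppa_mem_commutantFrom (k + 1)
  have hVC : V ∈ commutantFrom K N (k + 2) := nestMon_mem_commutantFrom d e k
  have hVy : Commute y V := mem_commutantFrom.1 hVC _ le_rfl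
  have hVz : Commute z V := mem_commutantFrom.1 hVC _ (by omega)
  induction c with
  | zero =>
    intro b c' hb
    rw [pow_zero, one_mul, ← mul_assoc, (hVy.pow_left b).eq, mul_assoc]
    exact (CommuteBefore.pow_mul_pow hx hy hxz hP (by omega)).mul_left hVz
  | succ c ih =>
    intro b c' hb
    match b with
    | 0 =>
      rw [pow_zero, one_mul]
      refine CommuteBefore.of_commute (mem_commutantFrom.1 ?_ _ le_rfl)
      exact mul_mem (mul_mem (pow_mem hxC _) (commutantFrom_mono (by omega) hVC)) (pow_mem hxC _)
    | 1 =>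
      obtain ⟨X, hXC, Y, hYC, hXY⟩ : ∃ X ∈ commutantFrom K N (k + 2),
          ∃ Y ∈ commutantFrom K N (k + 2), x * V * x ^ c' = X * x ^ (c' + 1) * Y :=
        exists_ppa_mul_nestMon_mul_pow d e k c'
      have hzX : Commute z X := mem_commutantFrom.1 hXC _ (by omega)
      have hyX : Commute y X := mem_commutantFrom.1 hXC _ le_rfl
      have hzY : Commute z Y := mem_commutantFrom.1 hYC _ (by omega)
      have hyY : Commute y Y := mem_commutantFrom.1 hYC _ le_rfl
      have hsplit :
          y ^ 1 * (x ^ (c + 1) * V * x ^ c') = x ^ c * X * (y ^ 1 * x ^ (c' + 1)) * Y := by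
        calc y ^ 1 * (x ^ (c + 1) * V * x ^ c') = x ^ c * (y * (x * V * x ^ c')) := by
              rw [pow_one, ← mul_assoc, ← mul_assoc, hx.mul_pow_succ_eq_pow_mul]
              simp only [mul_assoc]
          _ = x ^ c * X * (y ^ 1 * x ^ (c' + 1)) * Y := by
              rw [hXY, pow_one, ← mul_assoc y, ← mul_assoc y, hyX.eq]; simp only [mul_assoc]
      rw [hsplit]
      exact ((CommuteBefore.pow_mul_pow hx hy hxz hP (Nat.le_add_left 1 c')).mul_left
        ((hxz.symm.pow_right c).mul_right hzX)).mul_right hzY hyY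
    | b + 2 =>
      have hsplit : y ^ (b + 2) * (x ^ (c + 1) * V * x ^ c')
          = y * x * (y ^ (b + 1) * (x ^ c * V * x ^ c')) := by
        rw [pow_succ' x c]
        simp only [← mul_assoc]
        rw [hy.pow_succ_mul_eq_mul_pow]
      rw [hsplit]
      refine hP.mul (ih (by omega)) (v := y ^ b * (x ^ c * V * x ^ c') * y) ?_
      rw [pow_succ']; simp only [mul_assoc]

theorem commuteBefore_pow_mul_nestMon {d e : ℕ → ℕ} {i : ℕ} (h : d (i + 1) ≤ d i + e i) :
    CommuteBefore (𝔞 (i + 2)) (𝔞 (i + 1)) (𝔞 (i + 1) ^ d (i + 1) * nestMon K N d e i) := by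
  cases i with
  | zero =>
    rw [nestMon, mul_one]
    exact CommuteBefore.pow (commute_ppa_succ_mul 0) _
  | succ k => exact commuteBefore_pow_mul_pow_mul_mul_pow d e k (d (k + 1)) h

theorem nestMon_mul_ppa_self (d e : ℕ → ℕ) (i : ℕ) :
    nestMon K N d e (i + 1) * 𝔞 (i + 1)
      = nestMon K N d (update e (i + 1) (e (i + 1) + 1)) (i + 1) := by
  rw [nestMon, nestMon, update_self, pow_succ, mul_assoc _ _ (𝔞 (i + 1)),
    nestMon_congr (e' := update e (i + 1) (e (i + 1) + 1)) (fun _ _ => rfl)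
      (fun m hm => (update_of_ne (by omega) _ e).symm)]

theorem nestMon_mul_ppa_of_eq_succ {d e : ℕ → ℕ} {i m : ℕ} (hd : d (i + 1) ≤ d i + e i)
    (hm : e (i + 2) = m + 1) :
    nestMon K N d e (i + 2) * 𝔞 (i + 1)
      = nestMon K N (update d (i + 2) (d (i + 2) + 1))
          (update (update e (i + 1) (e (i + 1) + 1)) (i + 2) m) (i + 2) := by
  have hV : nestMon K N (update d (i + 2) (d (i + 2) + 1))
      (update (update e (i + 1) (e (i + 1) + 1)) (i + 2) m) i = nestMon K N d e i :=
    nestMon_congr (fun k hk => by rw [update_of_ne (by omega)])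
      (fun k hk => by rw [update_of_ne (by omega), update_of_ne (by omega)])
  simp only [nestMon, hV, update_self, update_of_ne (show i + 1 ≠ i + 2 by omega), hm,
    show i + 1 + 1 = i + 2 from rfl]
  have hcore : CommuteBefore (𝔞 (i + 2)) (𝔞 (i + 1)) _ := commuteBefore_pow_mul_nestMon hd
  have hx : Commute (𝔞 (i + 1)) (𝔞 (i + 2) * 𝔞 (i + 1)) := commute_ppa_succ_mul i
  have hy : Commute (𝔞 (i + 2)) (𝔞 (i + 2) * 𝔞 (i + 1)) := commute_ppa_succ_succ_mul i
  set x := 𝔞 (i + 1)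
  set y := 𝔞 (i + 2)
  set u := x ^ d (i + 1) * nestMon K N d e i
  calc y ^ d (i + 2) * (u * x ^ e (i + 1)) * y ^ (m + 1) * x
      = y ^ d (i + 2) * u * (x ^ e (i + 1) * y ^ (m + 1) * x) := by simp only [mul_assoc]
    _ = y ^ d (i + 2) * (u * y * x) * (x ^ e (i + 1) * y ^ m) := by
        rw [← hx.mul_pow_succ_mul_pow hy, pow_succ' x]; simp only [mul_assoc]
    _ = y ^ (d (i + 2) + 1) * (u * x ^ (e (i + 1) + 1)) * y ^ m := by
        rw [hcore, pow_succ y, pow_succ' x]; simp only [mul_assoc]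

/-- `d 1 = 0` since the normal form has no factor `a_1^{d_1}`; the paper's `d_2 ≤ k_1` is then the
case `i = 1` of the inequality. -/
def IsNormal (d e : ℕ → ℕ) (p : ℕ) : Prop :=
  d 1 = 0 ∧ ∀ i < p, d (i + 1) ≤ d i + e i

theorem IsNormal.shift {d e : ℕ → ℕ} {p j m : ℕ} (h : IsNormal d e p) (hj : 1 ≤ j)
    (hm : e (j + 1) = m + 1) :
    IsNormal (update d (j + 1) (d (j + 1) + 1)) (update (update e j (e j + 1)) (j + 1) m) p := by
  refine ⟨by rw [update_of_ne (by omega), h.1], fun k hk => ?_⟩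
  have := h.2 k hk
  simp only [update_apply, Nat.add_right_cancel_iff]
  split_ifs <;> subst_vars <;> omega

theorem exists_nestMon_mul_ppa {d e : ℕ → ℕ} {p j : ℕ} (h : IsNormal d e p) (hj : 1 ≤ j)
    (hjp : j ≤ p) : ∃ d' e', IsNormal d' e' p ∧ nestMon K N d e p * 𝔞 j = nestMon K N d' e' p := by
  obtain ⟨i, rfl⟩ : ∃ i, j = i + 1 := ⟨j - 1, by omega⟩
  by_cases hpos : i + 2 ≤ p ∧ e (i + 2) ≠ 0
  · obtain ⟨m, hm⟩ := Nat.exists_eq_add_one_of_ne_zero hpos.2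
    exact ⟨_, _, h.shift hj hm,
      nestMon_mul_of_le hpos.1 (nestMon_mul_ppa_of_eq_succ (h.2 i (by omega)) hm)
        (fun k hk _ => (commute_ppa_ppa (by omega)).pow_right _)
        (fun k hk _ => update_of_ne (by omega) _ _)
        (fun k hk _ => by rw [update_of_ne (by omega), update_of_ne (by omega)])⟩
  · refine ⟨d, _, ⟨h.1, fun k hk => (h.2 k hk).trans (Nat.add_le_add_left ?_ _)⟩,
      nestMon_mul_of_le hjp (nestMon_mul_ppa_self d e i) (fun k hk hkp => ?_) (fun _ _ _ => rfl)
        (fun k hk _ => update_of_ne (by omega) _ _)⟩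
    · exact le_update_iff.2 ⟨Nat.le_succ _, fun _ _ => le_rfl⟩ k
    · rcases Nat.lt_or_ge (i + 2) k with hk' | hk'
      · exact (commute_ppa_ppa (by omega)).pow_right _
      · obtain rfl : k = i + 2 := by omega
        rw [not_and_not_right.mp hpos hkp, pow_zero]
        exact Commute.one_right _

theorem exists_isNormal_prod_eq_nestMon {p : ℕ} (l : List ℕ) (hl : ∀ x ∈ l, 1 ≤ x ∧ x ≤ p) :
    ∃ d e, IsNormal d e p ∧ (l.map (ppa K N)).prod = nestMon K N d e p := by
  induction l using List.reverseRecOn with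
  | nil => exact ⟨0, 0, ⟨rfl, fun _ _ => le_rfl⟩, (nestMon_zero_zero p).symm⟩
  | append_singleton l j ih =>
    obtain ⟨d, e, hn, hprod⟩ := ih fun x hx => hl x (by simp [hx])
    obtain ⟨hj, hjp⟩ := hl j (by simp)
    obtain ⟨d', e', hn', hmul⟩ := exists_nestMon_mul_ppa (K := K) (N := N) hn hj hjp
    exact ⟨d', e', hn', by simpa [hprod] using hmul⟩

theorem nestMon_eq_prod_mul_prod {d : ℕ → ℕ} (hd : d 1 = 0) (e : ℕ → ℕ) (p : ℕ) :
    nestMon K N d e p = ((List.range (p - 1)).map fun t => 𝔞 (p - t) ^ d (p - t)).prod *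
      ((List.range p).map fun t => 𝔞 (t + 1) ^ e (t + 1)).prod := by
  induction p with
  | zero => simp [nestMon]
  | succ p ih =>
    rcases p with _ | p
    · simp [nestMon, hd]
    · have hdec : ((List.range (p + 1 + 1 - 1)).map
            fun t => 𝔞 (p + 1 + 1 - t) ^ d (p + 1 + 1 - t)).prod = 𝔞 (p + 1 + 1) ^ d (p + 1 + 1) *
            ((List.range (p + 1 - 1)).map fun t => 𝔞 (p + 1 - t) ^ d (p + 1 - t)).prod := by
        simp [List.range_succ_eq_map, Function.comp_def]
      rw [nestMon, ih, hdec, List.range_succ (n := p + 1)]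
      simp [mul_assoc]

theorem nfMon_eq_nestMon {d : ℕ → ℕ} (hd : d 1 = 0) (e : ℕ → ℕ) :
    nfMon K N d e = nestMon K N d e (N - 1) := by
  rw [nestMon_eq_prod_mul_prod hd, nfMon, show N - 2 = N - 1 - 1 by omega]

end ParticAlgebra

/-- Every monomial in the partic algebra equals a normal-form monomial
`a_{N-1}^{d_{N-1}} ⋯ a_2^{d_2} a_1^{k_1} ⋯ a_{N-1}^{k_{N-1}}` with `d_2 ≤ k_1` and
`d_i ≤ d_{i-1} + k_{i-1}` for `3 ≤ i ≤ N-1`. -/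
theorem stmt7 (K : Type*) [Field K] (N : ℕ) (hN : 3 ≤ N) (l : List ℕ)
    (hl : ∀ x ∈ l, 1 ≤ x ∧ x ≤ N - 1) :
    ∃ d e : ℕ → ℕ, d 2 ≤ e 1 ∧
      (∀ i, 3 ≤ i → i ≤ N - 1 → d i ≤ d (i - 1) + e (i - 1)) ∧
      (l.map (ppa K N)).prod = nfMon K N d e := by
  obtain ⟨d, e, ⟨hd1, hde⟩, hprod⟩ :=
    ParticAlgebra.exists_isNormal_prod_eq_nestMon (K := K) (N := N) l hl
  refine ⟨d, e, ?_, fun i hi hiN => ?_, hprod.trans (ParticAlgebra.nfMon_eq_nestMon hd1 e).symm⟩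
  · simpa [hd1] using hde 1 (by omega)
  · obtain ⟨i, rfl⟩ : ∃ i', i = i' + 1 := ⟨i - 1, by omega⟩
    simpa using hde i (by omega)
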